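/- arXiv:2111.13170 — 4 statements merged into one kernel-verified Lean document; each statement's English description precedes it below -/
import Mathlib

section
/- Let V be a finite-dimensional vector space over a field K, β ∈ V* a linear functional, and φ_β the contraction map on Λ^k V. Then for every decomposable ω = v_1 ∧ ⋯ ∧ v_k, the image φ_β(ω) lies in Λ^{k-1}(ker β); i.e., φ_β takes values in the exterior power of the kernel of β. -/
open ExteriorAlgebra

/-!
For any `u : V`, the algebra endomorphism `Λ P` of `Λ V` induced by `P m = m - β m • u`
satisfies `x = Λ P x + u ∧ (β ⌋ x)`, where `β ⌋ ·` is Mathlib's left contraction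
(`CliffordAlgebra.contractLeft`, which on the exterior algebra is `φ_β`). Since `β ⌋ β ⌋ = 0`,
`φ_β ω = Λ P (φ_β ω)`. Choosing `β u = 1`, `P` maps `V` into `ker β`, and `Λ P` sends each
summand `v₁ ∧ ⋯ ∧ v̂ᵢ ∧ ⋯ ∧ v_k` of `φ_β ω` to a wedge of vectors of `ker β`.
-/

namespace Module.Dual

variable {R M : Type*} [CommRing R] [AddCommGroup M] [Module R M]

/-- For `d u = 1`, the projection `m ↦ m - d m • u` of `M` onto `ker d` along `R ∙ u`. -/
def projKer (d : Module.Dual R M) (u : M) : M →ₗ[R] M :=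
  LinearMap.id - d.smulRight u

theorem projKer_apply (d : Module.Dual R M) (u m : M) : d.projKer u m = m - d m • u :=
  rfl

theorem apply_projKer {d : Module.Dual R M} {u : M} (hu : d u = 1) (m : M) :
    d (d.projKer u m) = 0 := by
  simp [projKer_apply, hu]

end Module.Dual

namespace ExteriorAlgebra

variable {R M : Type*} [CommRing R] [AddCommGroup M] [Module R M]

theorem ιMulti_succAbove_succ {n : ℕ} (v : Fin (n + 2) → M) (i : Fin (n + 1)) :
    ιMulti R (n + 1) (fun j => v (i.succ.succAbove j)) =
      ι R (v 0) * ιMulti R n (fun j => Fin.tail v (i.succAbove j)) := by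
  rw [ιMulti_succ_apply]
  simp only [Fin.succ_succAbove_zero]
  congr 2
  ext j
  simp [Matrix.vecTail, Fin.tail, Fin.succ_succAbove_succ]

theorem contractLeft_ιMulti_succ (d : Module.Dual R M) {n : ℕ} (v : Fin (n + 1) → M) :
    CliffordAlgebra.contractLeft d (ιMulti R (n + 1) v) =
      ∑ i : Fin (n + 1), ((-1 : R) ^ (i : ℕ) * d (v i)) •
        ιMulti R n (fun j => v (i.succAbove j)) := by
  induction n with
  | zero => simp [ιMulti_succ_apply, Algebra.algebraMap_eq_smul_one]
  | succ n ih =>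
    rw [ιMulti_succ_apply, CliffordAlgebra.contractLeft_ι_mul, Fin.sum_univ_succ]
    simp only [ιMulti_succAbove_succ]
    rw [ih]
    simp only [Fin.val_zero, pow_zero, one_mul, Fin.val_succ, pow_succ, mul_neg_one, neg_mul,
      neg_smul, Finset.mul_sum, mul_smul_comm, Finset.sum_neg_distrib, sub_eq_add_neg]
    rfl

theorem ι_mul_ι_anticomm (m m' : M) : ι R m * ι R m' = -(ι R m' * ι R m) :=
  eq_neg_of_add_eq_zero_left (ι_add_mul_swap m m')

theorem map_projKer_add_ι_mul_contractLeft (d : Module.Dual R M) (u : M)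
    (x : ExteriorAlgebra R M) :
    map (d.projKer u) x + ι R u * CliffordAlgebra.contractLeft d x = x := by
  induction x using CliffordAlgebra.left_induction with
  | algebraMap r => simp
  | add x y hx hy =>
    rw [map_add, map_add, mul_add, add_add_add_comm, hx, hy]
  | ι_mul x m hx =>
    rw [map_mul, map_apply_ι, CliffordAlgebra.contractLeft_ι_mul, Module.Dual.projKer_apply]
    set X := map (d.projKer u) x
    set Y := CliffordAlgebra.contractLeft d x
    rw [← hx]
    simp only [map_sub, map_smul, sub_mul, mul_sub, mul_add, smul_mul_assoc, mul_smul_comm,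
      ← mul_assoc, ι_sq_zero, zero_mul, add_zero, ι_mul_ι_anticomm m u, neg_mul]
    abel

theorem map_projKer_eq_self {d : Module.Dual R M} (u : M)
    {x : ExteriorAlgebra R M} (hx : CliffordAlgebra.contractLeft d x = 0) :
    map (d.projKer u) x = x := by
  simpa [hx] using map_projKer_add_ι_mul_contractLeft d u x

end ExteriorAlgebra

theorem contraction_lands_in_kernel_general (K V : Type) [Field K] [AddCommGroup V] [Module K V] (n : ℕ)
    (β : V →ₗ[K] K) (v : Fin (n + 1) → V) :
    ∑ i : Fin (n + 1), ((-1 : K) ^ (i : ℕ) * β (v i)) •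
        ExteriorAlgebra.ιMulti K n (fun j => v (i.succAbove j)) ∈
      Submodule.span K {x : ExteriorAlgebra K V |
        ∃ w : Fin n → V, (∀ j, β (w j) = 0) ∧ x = ExteriorAlgebra.ιMulti K n w} := by
  by_cases hβ : β = 0
  · simp [hβ]
  obtain ⟨u, hu⟩ := LinearMap.surjective hβ 1
  rw [← contractLeft_ιMulti_succ, ← map_projKer_eq_self u
    (CliffordAlgebra.contractLeft_contractLeft _ _), contractLeft_ιMulti_succ, map_sum]
  refine Submodule.sum_mem _ fun i _ => ?_
  rw [map_smul, map_apply_ιMulti]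
  exact Submodule.smul_mem _ _
    (Submodule.subset_span ⟨_, fun _ => Module.Dual.apply_projKer hu _, rfl⟩)

/-- For every decomposable `ω = v₁ ∧ ⋯ ∧ v_k`, the image
`φ_β(ω) = Σᵢ (-1)^{i-1} β(vᵢ) v₁ ∧ ⋯ ∧ v̂ᵢ ∧ ⋯ ∧ v_k` lies in `Λ^{k-1}(ker β)`,
i.e. in the span of the decomposable `(k-1)`-vectors all of whose factors lie in
the kernel of `β`.  (Here `k = n + 1 > 0`.) -/
theorem contraction_lands_in_kernel (K V : Type) [Field K] [AddCommGroup V] [Module K V]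
    [FiniteDimensional K V] (n : ℕ) (hkd : n + 1 ≤ Module.finrank K V)
    (β : V →ₗ[K] K) (v : Fin (n + 1) → V) :
    ∑ i : Fin (n + 1), ((-1 : K) ^ (i : ℕ) * β (v i)) •
        ExteriorAlgebra.ιMulti K n (fun j => v (i.succAbove j)) ∈
      Submodule.span K {x : ExteriorAlgebra K V |
        ∃ w : Fin n → V, (∀ j, β (w j) = 0) ∧ x = ExteriorAlgebra.ιMulti K n w} :=
  contraction_lands_in_kernel_general K V n β v
end

section
/- Let V be a quadratic space of maximal Witt index p = ⌊dim V / 2⌋ over a field of characteristic ≠ 2, and let W_1, W_2 be maximal isotropic subspaces with q = dim(W_1 ∩ W_2). Then there exists a hyperbolic basis e_1, e_{-1}, …, e_p, e_{-p}, (e_0) of V such that W_1 = span{e_1, …, e_p} and W_2 = span{e_1, …, e_q, e_{-(q+1)}, …, e_{-p}}. -/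
section Preamble

variable {K V : Type} [Field K] [AddCommGroup V] [Module K V]

/-- A subspace is isotropic for the bilinear form `B`. -/
def IsotropicSub (B : LinearMap.BilinForm K V) (W : Submodule K V) : Prop :=
  ∀ x ∈ W, ∀ y ∈ W, B x y = 0

/-- A subspace is maximal isotropic for `B`. -/
def MaxIsotropic (B : LinearMap.BilinForm K V) (W : Submodule K V) : Prop :=
  IsotropicSub B W ∧ ∀ W' : Submodule K V, IsotropicSub B W' → W ≤ W' → W' = W

/-- `V` has maximal Witt index `⌊dim V / 2⌋`. -/
def MaxWittIndex (B : LinearMap.BilinForm K V) : Prop :=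
  ∃ W : Submodule K V, IsotropicSub B W ∧
    Module.finrank K ↥W = Module.finrank K V / 2

end Preamble

/-!
Every maximal isotropic subspace has dimension `p`: comparing it with an isotropic subspace of
dimension `p` through orthogonal complements bounds its dimension from below. Then induct on `p`.
If `W₁ ∩ W₂ ≠ 0`, pick `a ≠ 0` in it and an isotropic `b` with `⟨a, b⟩ = 1`; if `W₁ ∩ W₂ = 0`,
maximality of `W₂` gives `a ∈ W₁` and `b ∈ W₂` with `⟨a, b⟩ = 1`. Intersecting `W₁` and `W₂` with
the orthogonal complement of the hyperbolic plane spanned by `a, b` lowers `p` by one, and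
`dim (W₁ ∩ W₂)` by one in the first case. Finally, a hyperbolic family spans a nondegenerate
subspace, whose orthogonal complement is `0` or an anisotropic line according to the parity of
`dim V`.
-/

open Module Submodule Set

section FinTuple

variable {α β : Type*} {m : ℕ}

/-- `{e₁, …, e_q, f_{q+1}, …, f_m}`, indexing from `1`. -/
def mixedRange (e f : Fin m → α) (q : ℕ) : Set α :=
  e '' {i | (i : ℕ) < q} ∪ f '' {i | q ≤ (i : ℕ)}

lemma image_mixedRange (g : α → β) (e f : Fin m → α) (q : ℕ) :
    g '' mixedRange e f q = mixedRange (g ∘ e) (g ∘ f) q := by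
  simp only [mixedRange, image_union, image_image, Function.comp_def]

lemma mixedRange_cons_succ (a b : α) (e f : Fin m → α) (q : ℕ) :
    mixedRange (Fin.cons a e : Fin (m + 1) → α) (Fin.cons b f) (q + 1) =
      insert a (mixedRange e f q) := by
  ext x
  simp [mixedRange, Fin.exists_fin_succ, or_assoc, eq_comm]

lemma mixedRange_cons_zero (a b : α) (e f : Fin m → α) :
    mixedRange (Fin.cons a e : Fin (m + 1) → α) (Fin.cons b f) 0 =
      insert b (mixedRange e f 0) := by
  ext x
  simp [mixedRange, eq_comm]

lemma range_pair (a b : α) : range ![a] ∪ range ![b] = {a, b} := by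
  simp [pair_comm]

end FinTuple

section HyperbolicFamily

variable {K V : Type*} [Field K] [AddCommGroup V] [Module K V] {B : LinearMap.BilinForm K V}
  {m : ℕ}

structure IsHyperbolicFamily (B : LinearMap.BilinForm K V) (e f : Fin m → V) : Prop where
  apply_left : ∀ i j, B (e i) (e j) = 0
  apply_right : ∀ i j, B (f i) (f j) = 0
  apply_left_right : ∀ i j, B (e i) (f j) = if i = j then 1 else 0

namespace IsHyperbolicFamily

variable {e f : Fin m → V}

lemma of_restrict {W : Submodule K V} {e f : Fin m → W}
    (h : IsHyperbolicFamily (B.restrict W) e f) :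
    IsHyperbolicFamily B (W.subtype ∘ e) (W.subtype ∘ f) :=
  ⟨h.apply_left, h.apply_right, h.apply_left_right⟩

lemma cons (hsymm : B.IsSymm) {a b : V} (haa : B a a = 0) (hbb : B b b = 0) (hab : B a b = 1)
    (h : IsHyperbolicFamily B e f) (he : ∀ i, B a (e i) = 0 ∧ B b (e i) = 0)
    (hf : ∀ i, B a (f i) = 0 ∧ B b (f i) = 0) :
    IsHyperbolicFamily B (Fin.cons a e : Fin (m + 1) → V) (Fin.cons b f) := by
  have hsymm' (x y : V) : B x y = B y x := by simpa using hsymm.eq x y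
  refine ⟨fun i j => ?_, fun i j => ?_, fun i j => ?_⟩ <;>
    cases i using Fin.cases <;> cases j using Fin.cases <;>
    simp [haa, hbb, hab, he, hf, h.apply_left, h.apply_right, h.apply_left_right, hsymm' _ a,
      hsymm' _ b, (Fin.succ_ne_zero _).symm]

lemma apply_sum_right (h : IsHyperbolicFamily B e f) (g : Fin m ⊕ Fin m → K) (j : Fin m) :
    B (∑ k, g k • Sum.elim e f k) (f j) = g (.inl j) := by
  simp [Fintype.sum_sum_type, h.apply_right, h.apply_left_right]

lemma apply_sum_left (h : IsHyperbolicFamily B e f) (g : Fin m ⊕ Fin m → K) (j : Fin m) :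
    B (e j) (∑ k, g k • Sum.elim e f k) = g (.inr j) := by
  simp [Fintype.sum_sum_type, h.apply_left, h.apply_left_right]

lemma linearIndependent (h : IsHyperbolicFamily B e f) : LinearIndependent K (Sum.elim e f) := by
  refine Fintype.linearIndependent_iff.2 fun g hg k => ?_
  cases k with
  | inl j => simpa [hg] using (h.apply_sum_right g j).symm
  | inr j => simpa [hg] using (h.apply_sum_left g j).symm

lemma finrank_span (h : IsHyperbolicFamily B e f) :
    finrank K (span K (range e ∪ range f)) = 2 * m := by
  rw [← Sum.elim_range, finrank_span_eq_card h.linearIndependent]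
  simp [two_mul]

lemma disjoint_orthogonal (hsymm : B.IsSymm) (h : IsHyperbolicFamily B e f) :
    Disjoint (span K (range e ∪ range f)) (B.orthogonal (span K (range e ∪ range f))) := by
  rw [disjoint_iff, eq_bot_iff]
  rintro x ⟨hx, hxo⟩
  rw [← Sum.elim_range] at hx hxo
  obtain ⟨g, rfl⟩ := (mem_span_range_iff_exists_fun K).1 hx
  have hg : ∀ k, g k = 0 := by
    rintro (j | j)
    · rw [← h.apply_sum_right g j, ← hsymm.eq_iff]
      exact hxo _ (subset_span ⟨.inr j, rfl⟩)
    · rw [← h.apply_sum_left g j]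
      exact hxo _ (subset_span ⟨.inl j, rfl⟩)
  simp [hg]

variable [FiniteDimensional K V]

lemma span_eq_top (h : IsHyperbolicFamily B e f) (hn : finrank K V = 2 * m) :
    span K (range e ∪ range f) = ⊤ := by
  rw [← Sum.elim_range]
  exact h.linearIndependent.span_eq_top_of_card_eq_finrank' (by simp [hn, two_mul])

lemma exists_anisotropic_orthogonal (hsymm : B.IsSymm) (hB : B.Nondegenerate)
    (h : IsHyperbolicFamily B e f) (hn : finrank K V = 2 * m + 1) :
    ∃ e0 : V, (∀ i, B e0 (e i) = 0 ∧ B e0 (f i) = 0) ∧ B e0 e0 ≠ 0 ∧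
      LinearIndependent K (Sum.elim (Sum.elim e f) (fun _ : Fin 1 => e0)) ∧
      span K (range e ∪ range f ∪ {e0}) = ⊤ := by
  set H := span K (range e ∪ range f)
  have hcompl : IsCompl H (B.orthogonal H) :=
    (LinearMap.BilinForm.isCompl_orthogonal_iff_disjoint hsymm.isRefl).2
      (h.disjoint_orthogonal hsymm)
  have hdim : finrank K (B.orthogonal H) = 1 := by
    rw [LinearMap.BilinForm.finrank_orthogonal hB, h.finrank_span, hn]
    omega
  obtain ⟨e0, he0, hne⟩ := exists_mem_ne_zero_of_ne_bot
    (by rw [Ne, ← finrank_eq_zero, hdim]; exact one_ne_zero : B.orthogonal H ≠ ⊥)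
  have hline : K ∙ e0 = B.orthogonal H :=
    eq_of_le_of_finrank_eq ((span_singleton_le_iff_mem _ _).2 he0)
      (by rw [finrank_span_singleton hne, hdim])
  have htop : span K (range e ∪ range f ∪ {e0}) = ⊤ := by
    rw [span_union, hline, hcompl.sup_eq_top]
  have horth (x : V) (hx : x ∈ H) : B e0 x = 0 := by
    rw [hsymm.eq_iff]; exact he0 x hx
  refine ⟨e0, fun i => ⟨horth _ (subset_span (.inl ⟨i, rfl⟩)),
    horth _ (subset_span (.inr ⟨i, rfl⟩))⟩, fun h00 => hne (hB.1 e0 fun y => ?_), ?_, htop⟩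
  · obtain ⟨x, hx, z, hz, rfl⟩ := mem_sup.1 (hcompl.sup_eq_top ▸ mem_top : y ∈ H ⊔ B.orthogonal H)
    obtain ⟨c, rfl⟩ := mem_span_singleton.1 (hline ▸ hz)
    rw [map_add, map_smul, horth x hx, h00, smul_zero, add_zero]
  · refine linearIndependent_of_top_le_span_of_card_eq_finrank ?_ (by simp [hn, two_mul])
    rw [Sum.elim_range, Sum.elim_range, range_const, htop]

end IsHyperbolicFamily

end HyperbolicFamily


section QuadraticSpace

variable {K V : Type} [Field K] [AddCommGroup V] [Module K V] {B : LinearMap.BilinForm K V}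
  {W W' W₁ W₂ : Submodule K V} {a b c d : V}

lemma IsotropicSub.le_orthogonal (hW : IsotropicSub B W) : W ≤ B.orthogonal W :=
  fun x hx y hy => hW y hy x hx

lemma IsotropicSub.mono (hW : IsotropicSub B W) (hle : W' ≤ W) : IsotropicSub B W' :=
  fun x hx y hy => hW x (hle hx) y (hle hy)

lemma IsotropicSub.comap_subtype (hW : IsotropicSub B W) (Vo : Submodule K V) :
    IsotropicSub (B.restrict Vo) (W.comap Vo.subtype) :=
  fun x hx y hy => hW x hx y hy

lemma IsotropicSub.sup_span_singleton (hsymm : B.IsSymm) (hW : IsotropicSub B W) {v : V}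
    (hv : B v v = 0) (hvW : v ∈ B.orthogonal W) : IsotropicSub B (W ⊔ K ∙ v) := by
  have hWv (w : V) (hw : w ∈ W) : B v w = 0 := by rw [hsymm.eq_iff]; exact hvW w hw
  rintro _ hx _ hy
  obtain ⟨w, hw, _, hx', rfl⟩ := mem_sup.1 hx
  obtain ⟨w', hw', _, hy', rfl⟩ := mem_sup.1 hy
  obtain ⟨s, rfl⟩ := mem_span_singleton.1 hx'
  obtain ⟨t, rfl⟩ := mem_span_singleton.1 hy'
  simp [hW w hw w' hw', hvW w hw, hWv w' hw', hv]

lemma MaxIsotropic.mem_of_mem_orthogonal (hsymm : B.IsSymm) (hW : MaxIsotropic B W) {v : V}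
    (hv : B v v = 0) (hvW : v ∈ B.orthogonal W) : v ∈ W := by
  rw [← hW.2 _ (hW.1.sup_span_singleton hsymm hv hvW) le_sup_left]
  exact mem_sup_right (mem_span_singleton_self v)

lemma exists_isotropic_apply_eq_one (h2 : (2 : K) ≠ 0) (hsymm : B.IsSymm) (hB : B.Nondegenerate)
    (ha : a ≠ 0) (haa : B a a = 0) : ∃ b, B b b = 0 ∧ B a b = 1 := by
  obtain ⟨v, hv⟩ : ∃ v, B a v ≠ 0 := by
    by_contra! h
    exact ha (hB.1 a h)
  set u := (B a v)⁻¹ • v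
  have hau : B a u = 1 := by simp [u, hv]
  have hua : B u a = 1 := by rw [← hau]; exact hsymm.eq u a
  -- as `a` is isotropic, `B (u - t • a) (u - t • a) = B u u - 2 * t` while `B a (u - t • a) = 1`
  refine ⟨u - (B u u / 2) • a, ?_, by simp [hau, haa]⟩
  simp only [map_sub, map_smul, LinearMap.sub_apply, LinearMap.smul_apply, smul_eq_mul, haa,
    hau, hua]
  field_simp
  ring

lemma exists_mem_apply_eq_one (hsymm : B.IsSymm) (hW₁ : IsotropicSub B W₁)
    (hW₂ : MaxIsotropic B W₂) (hbot : W₁ ⊓ W₂ = ⊥) (ha : a ∈ W₁) (ha0 : a ≠ 0) :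
    ∃ b ∈ W₂, B a b = 1 := by
  obtain ⟨w, hw, hne⟩ : ∃ w ∈ W₂, B a w ≠ 0 := by
    by_contra! h
    have haW₂ : a ∈ W₂ := hW₂.mem_of_mem_orthogonal hsymm (hW₁ a ha a ha)
      fun w hw => by rw [hsymm.eq_iff]; exact h w hw
    exact ha0 (by simpa [hbot] using mem_inf.2 ⟨ha, haW₂⟩)
  exact ⟨(B a w)⁻¹ • w, W₂.smul_mem _ hw, by simp [hne]⟩

lemma exists_hyperbolic_pair_adapted (h2 : (2 : K) ≠ 0) (hsymm : B.IsSymm)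
    (hB : B.Nondegenerate) (hW₁ : IsotropicSub B W₁) (hW₂ : MaxIsotropic B W₂) (hne : W₁ ≠ ⊥) :
    ∃ a b, B a a = 0 ∧ B b b = 0 ∧ B a b = 1 ∧ a ∈ W₁ ∧ (a ∈ W₂ ∨ W₁ ⊓ W₂ = ⊥ ∧ b ∈ W₂) := by
  by_cases hbot : W₁ ⊓ W₂ = ⊥
  · obtain ⟨a, ha, ha0⟩ := exists_mem_ne_zero_of_ne_bot hne
    obtain ⟨b, hb, hab⟩ := exists_mem_apply_eq_one hsymm hW₁ hW₂ hbot ha ha0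
    exact ⟨a, b, hW₁ a ha a ha, hW₂.1 b hb b hb, hab, ha, .inr ⟨hbot, hb⟩⟩
  · obtain ⟨a, ⟨ha₁, ha₂⟩, ha0⟩ := exists_mem_ne_zero_of_ne_bot hbot
    obtain ⟨b, hbb, hab⟩ := exists_isotropic_apply_eq_one h2 hsymm hB ha0 (hW₁ a ha₁ a ha₁)
    exact ⟨a, b, hW₁ a ha₁ a ha₁, hbb, hab, ha₁, .inl ha₂⟩

lemma isHyperbolicFamily_pair (haa : B a a = 0) (hbb : B b b = 0) (hab : B a b = 1) :
    IsHyperbolicFamily B ![a] ![b] :=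
  ⟨by simp [haa], by simp [hbb], by simp [hab]⟩

lemma IsotropicSub.eq_span_singleton_sup_orthogonal_inf (hsymm : B.IsSymm)
    (hW : IsotropicSub B W) (hc : c ∈ W) (hcd : B c d = 1) :
    W = (K ∙ c) ⊔ (B.orthogonal (span K {c, d}) ⊓ W) := by
  refine le_antisymm (fun w hw => ?_) (sup_le ((span_singleton_le_iff_mem _ _).2 hc) inf_le_right)
  have hdc : B d c = 1 := by rw [← hcd]; exact hsymm.eq d c
  have hwd : B d w = B w d := hsymm.eq d w
  have hrest : w - B w d • c ∈ B.orthogonal (span K {c, d}) ⊓ W := by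
    refine ⟨fun x hx => ?_, W.sub_mem hw (W.smul_mem _ hc)⟩
    obtain ⟨s, t, rfl⟩ := mem_span_pair.1 hx
    simp [hW c hc w hw, hW c hc c hc, hdc, hwd]
  rw [← sub_add_cancel w (B w d • c), add_comm]
  exact add_mem (mem_sup_left (smul_mem _ _ (mem_span_singleton_self c))) (mem_sup_right hrest)

lemma IsotropicSub.eq_span_insert_image (hsymm : B.IsSymm) (hW : IsotropicSub B W) (hc : c ∈ W)
    (hcd : B c d = 1) {Vo : Submodule K V} (hVo : B.orthogonal (span K {c, d}) = Vo)
    {s : Set Vo} (hs : W.comap Vo.subtype = span K s) :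
    W = span K (insert c (Vo.subtype '' s)) := by
  subst hVo
  rw [span_insert, span_image, ← hs, map_comap_subtype]
  exact hW.eq_span_singleton_sup_orthogonal_inf hsymm hc hcd

variable [FiniteDimensional K V]

lemma IsotropicSub.two_mul_finrank_le (hB : B.Nondegenerate) (hW : IsotropicSub B W) :
    2 * finrank K W ≤ finrank K V := by
  have := finrank_mono hW.le_orthogonal
  rw [LinearMap.BilinForm.finrank_orthogonal hB] at this
  omega

lemma IsotropicSub.maxIsotropic (hB : B.Nondegenerate) (hW : IsotropicSub B W)
    (hdim : finrank K W = finrank K V / 2) : MaxIsotropic B W := by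
  refine ⟨hW, fun W' hW' hle => (eq_of_le_of_finrank_le hle ?_).symm⟩
  have := hW'.two_mul_finrank_le hB
  omega

lemma MaxIsotropic.finrank_le (hsymm : B.IsSymm) (hB : B.Nondegenerate)
    (hW : IsotropicSub B W) (hW' : MaxIsotropic B W') : finrank K W ≤ finrank K W' := by
  have hinf : W ⊓ B.orthogonal W' ≤ W ⊓ W' := fun x hx =>
    ⟨hx.1, hW'.mem_of_mem_orthogonal hsymm (hW x hx.1 x hx.1) hx.2⟩
  have hsup : W ⊔ B.orthogonal W' ≤ B.orthogonal (W ⊓ W') :=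
    sup_le (fun x hx y hy => hW y hy.1 x hx) (fun x hx y hy => hx y hy.2)
  have h1 := finrank_sup_add_finrank_inf_eq W (B.orthogonal W')
  have h2 := finrank_mono hinf
  have h3 := finrank_mono hsup
  have h4 := finrank_mono (inf_le_right : W ⊓ W' ≤ W')
  have h5 := Submodule.finrank_le W'
  rw [LinearMap.BilinForm.finrank_orthogonal hB] at h1 h3
  omega

lemma MaxIsotropic.finrank_eq (hsymm : B.IsSymm) (hB : B.Nondegenerate)
    (hWitt : MaxWittIndex B) (hW : MaxIsotropic B W) : finrank K W = finrank K V / 2 := by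
  obtain ⟨W₀, hW₀, hdim⟩ := hWitt
  have := hW.finrank_le hsymm hB hW₀
  have := hW.1.two_mul_finrank_le hB
  omega

lemma finrank_orthogonal_span_pair (hB : B.Nondegenerate) (haa : B a a = 0) (hbb : B b b = 0)
    (hab : B a b = 1) : finrank K (B.orthogonal (span K {a, b})) + 2 = finrank K V := by
  have h := (isHyperbolicFamily_pair haa hbb hab).finrank_span
  rw [range_pair] at h
  have := Submodule.finrank_le (span K {a, b})
  rw [LinearMap.BilinForm.finrank_orthogonal hB]
  omega

lemma nondegenerate_restrict_orthogonal_span_pair (hsymm : B.IsSymm) (hB : B.Nondegenerate)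
    (haa : B a a = 0) (hbb : B b b = 0) (hab : B a b = 1) :
    (B.restrict (B.orthogonal (span K {a, b}))).Nondegenerate := by
  have := (isHyperbolicFamily_pair haa hbb hab).disjoint_orthogonal hsymm
  rw [range_pair] at this
  refine B.nondegenerate_restrict_of_disjoint_orthogonal hsymm.isRefl ?_
  rw [LinearMap.BilinForm.orthogonal_orthogonal hB hsymm.isRefl]
  exact this.symm

lemma IsotropicSub.finrank_comap_add_one (hsymm : B.IsSymm) (hW : IsotropicSub B W) (hc : c ∈ W)
    (hcd : B c d = 1) {Vo : Submodule K V} (hVo : B.orthogonal (span K {c, d}) = Vo) :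
    finrank K (W.comap Vo.subtype) + 1 = finrank K W := by
  subst hVo
  have hc0 : c ≠ 0 := by rintro rfl; simp at hcd
  have hdisj : (K ∙ c) ⊓ (B.orthogonal (span K {c, d}) ⊓ W) = ⊥ := by
    rw [eq_bot_iff]
    rintro _ ⟨hx, hxo, -⟩
    obtain ⟨t, rfl⟩ := mem_span_singleton.1 hx
    have := hxo d (subset_span (by simp))
    rw [map_smul, ← hsymm.eq, hcd] at this
    simp_all
  have := finrank_sup_add_finrank_inf_eq (K ∙ c) (B.orthogonal (span K {c, d}) ⊓ W)
  rw [hdisj, finrank_bot, finrank_span_singleton hc0,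
    ← hW.eq_span_singleton_sup_orthogonal_inf hsymm hc hcd] at this
  rw [← finrank_map_subtype_eq, map_comap_subtype]
  omega

lemma IsotropicSub.finrank_comap_orthogonal_span_pair_add_one (hsymm : B.IsSymm)
    (hW : IsotropicSub B W) (hab : B a b = 1) (h : a ∈ W ∨ b ∈ W) :
    finrank K (W.comap (B.orthogonal (span K {a, b})).subtype) + 1 = finrank K W := by
  rcases h with ha | hb
  · exact hW.finrank_comap_add_one hsymm ha hab rfl
  · exact hW.finrank_comap_add_one hsymm hb (by rw [← hab]; exact hsymm.eq b a)
      (by rw [pair_comm])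

lemma exists_adapted_of_orthogonal_pair (hsymm : B.IsSymm) (hW₁ : IsotropicSub B W₁)
    (hW₂ : IsotropicSub B W₂) (haa : B a a = 0) (hbb : B b b = 0) (hab : B a b = 1)
    (ha₁ : a ∈ W₁) (h₂ : a ∈ W₂ ∨ W₁ ⊓ W₂ = ⊥ ∧ b ∈ W₂) {Vo : Submodule K V}
    (hVo : B.orthogonal (span K {a, b}) = Vo) {p : ℕ} {e f : Fin p → Vo}
    (hef : IsHyperbolicFamily (B.restrict Vo) e f) (he : W₁.comap Vo.subtype = span K (range e))
    (hf : W₂.comap Vo.subtype =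
      span K (mixedRange e f (finrank K ↥(W₁.comap Vo.subtype ⊓ W₂.comap Vo.subtype)))) :
    ∃ e f : Fin (p + 1) → V, IsHyperbolicFamily B e f ∧ W₁ = span K (range e) ∧
      W₂ = span K (mixedRange e f (finrank K ↥(W₁ ⊓ W₂))) := by
  have hperp (x : Vo) : B a x = 0 ∧ B b x = 0 := by
    subst hVo
    exact ⟨x.2 a (subset_span (by simp)), x.2 b (subset_span (by simp))⟩
  refine ⟨Fin.cons a (Vo.subtype ∘ e), Fin.cons b (Vo.subtype ∘ f),
    hef.of_restrict.cons hsymm haa hbb hab (fun _ => hperp _) (fun _ => hperp _), ?_, ?_⟩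
  · rw [Fin.range_cons, range_comp]
    exact hW₁.eq_span_insert_image hsymm ha₁ hab hVo he
  rcases h₂ with ha₂ | ⟨hbot, hb₂⟩
  · have hq := (hW₁.mono inf_le_left).finrank_comap_add_one hsymm ⟨ha₁, ha₂⟩ hab hVo
    rw [comap_inf] at hq
    rw [← hq, mixedRange_cons_succ, ← image_mixedRange]
    exact hW₂.eq_span_insert_image hsymm ha₂ hab hVo hf
  · rw [← comap_inf, hbot, comap_bot, ker_subtype, finrank_bot] at hf
    rw [hbot, finrank_bot, mixedRange_cons_zero, ← image_mixedRange]
    exact hW₂.eq_span_insert_image hsymm hb₂ (by rw [← hab]; exact hsymm.eq b a)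
      (by rw [pair_comm]; exact hVo) hf

theorem exists_isHyperbolicFamily_adapted (h2 : (2 : K) ≠ 0) (p : ℕ) (hsymm : B.IsSymm)
    (hB : B.Nondegenerate) (hp : finrank K V / 2 = p) (hW₁ : IsotropicSub B W₁)
    (hW₂ : IsotropicSub B W₂) (hdim₁ : finrank K W₁ = p) (hdim₂ : finrank K W₂ = p) :
    ∃ e f : Fin p → V, IsHyperbolicFamily B e f ∧ W₁ = span K (range e) ∧
      W₂ = span K (mixedRange e f (finrank K ↥(W₁ ⊓ W₂))) := by
  induction p generalizing V with
  | zero =>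
    rw [finrank_eq_zero] at hdim₁ hdim₂
    exact ⟨![], ![], ⟨finZeroElim, finZeroElim, finZeroElim⟩, by simp [hdim₁],
      by simp [hdim₂, mixedRange, Set.eq_empty_of_isEmpty]⟩
  | succ p ih =>
    have hne : W₁ ≠ ⊥ := by rw [Ne, ← finrank_eq_zero, hdim₁]; exact p.succ_ne_zero
    obtain ⟨a, b, haa, hbb, hab, ha₁, h₂⟩ := exists_hyperbolic_pair_adapted h2 hsymm hB hW₁
      (hW₂.maxIsotropic hB (hdim₂.trans hp.symm)) hne
    have hdim := finrank_orthogonal_span_pair hB haa hbb hab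
    have hdim₁' := hW₁.finrank_comap_orthogonal_span_pair_add_one hsymm hab (.inl ha₁)
    have hdim₂' := hW₂.finrank_comap_orthogonal_span_pair_add_one hsymm hab
      (h₂.imp_right And.right)
    obtain ⟨e, f, hef, he, hf⟩ := ih (hsymm.restrict _)
      (nondegenerate_restrict_orthogonal_span_pair hsymm hB haa hbb hab) (by omega)
      (hW₁.comap_subtype _) (hW₂.comap_subtype _) (by omega) (by omega)
    exact exists_adapted_of_orthogonal_pair hsymm hW₁ hW₂ haa hbb hab ha₁ h₂ rfl hef he hf

end QuadraticSpace

/-- Here `e i` plays the role of `e_{i+1}` and `f i` of `e_{-(i+1)}`. -/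
theorem exists_hyperbolic_basis_adapted (K V : Type) [Field K] [AddCommGroup V] [Module K V]
    [FiniteDimensional K V] (h2 : (2 : K) ≠ 0)
    (B : LinearMap.BilinForm K V) (hsymm : B.IsSymm) (hB : B.Nondegenerate)
    (hWitt : MaxWittIndex B)
    (W1 W2 : Submodule K V) (hW1 : MaxIsotropic B W1) (hW2 : MaxIsotropic B W2) :
    ∃ e f : Fin (Module.finrank K V / 2) → V,
      (∀ i j, B (e i) (e j) = 0) ∧ (∀ i j, B (f i) (f j) = 0) ∧
      (∀ i j, B (e i) (f j) = if i = j then 1 else 0) ∧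
      W1 = Submodule.span K (Set.range e) ∧
      W2 = Submodule.span K
        (e '' {i | (i : ℕ) < Module.finrank K ↥(W1 ⊓ W2)} ∪
          f '' {i | Module.finrank K ↥(W1 ⊓ W2) ≤ (i : ℕ)}) ∧
      (Even (Module.finrank K V) →
        LinearIndependent K (Sum.elim e f) ∧
        Submodule.span K (Set.range e ∪ Set.range f) = ⊤) ∧
      (Odd (Module.finrank K V) → ∃ e0 : V,
        (∀ i, B e0 (e i) = 0 ∧ B e0 (f i) = 0) ∧ B e0 e0 ≠ 0 ∧
        LinearIndependent K (Sum.elim (Sum.elim e f) (fun _ : Fin 1 => e0)) ∧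
        Submodule.span K (Set.range e ∪ Set.range f ∪ {e0}) = ⊤) := by
  obtain ⟨e, f, hef, he, hf⟩ := exists_isHyperbolicFamily_adapted h2 _ hsymm hB rfl hW1.1 hW2.1
    (hW1.finrank_eq hsymm hB hWitt) (hW2.finrank_eq hsymm hB hWitt)
  refine ⟨e, f, hef.apply_left, hef.apply_right, hef.apply_left_right, he, hf,
    fun heven => ⟨hef.linearIndependent, hef.span_eq_top (Nat.two_mul_div_two_of_even heven).symm⟩,
    fun hodd => hef.exists_anisotropic_orthogonal hsymm hB
      (Nat.two_mul_div_two_add_one_of_odd hodd).symm⟩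
end

section
/- Let V = K^7 with basis e_0, e_1, e_2, e_3, e_{-1}, e_{-2}, e_{-3} and symmetric bilinear form given by ⟨e_0,e_0⟩ = -1/2, ⟨e_i, e_{-i}⟩ = 1 for i = 1,2,3, and all other pairings zero. Then the 3-vector ω_7 = e_1 ∧ e_2 ∧ e_3 + e_{-1} ∧ e_{-2} ∧ e_{-3} + e_0 ∧ (e_1 ∧ e_{-1} + e_2 ∧ e_{-2} + e_3 ∧ e_{-3}) is not decomposable, i.e., ω_7 ∉ Ĝr(3,V). -/
/-!
If `ω₇ = v₀ ∧ v₁ ∧ v₂`, then `v₀ ∧ ω₇ = 0`. But `u ∧ ω₇ = 0` forces `u = 0`: for each `i`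
there is a basis 4-vector `eᵢ ∧ eⱼ ∧ eₖ ∧ eₗ` (with `(j, k, l) = complementTriple i`) along which
exactly one of the five terms of `ω₇` contributes to `u ∧ ω₇`, and its coefficient is `uᵢ`.
Hence `v₀ = 0` and `ω₇ = 0`, which is absurd since `e₀ ∧ ω₇ ≠ 0`.
-/

open ExteriorAlgebra

/-- The standard basis of `K^7`, in the ordering `e₀, e₁, e₂, e₃, e₋₁, e₋₂, e₋₃`. -/
noncomputable def e7 (K : Type) [RCLike K] (i : Fin 7) : Fin 7 → K := Pi.single i 1

/-- The 3-form `ω₇ = e₁∧e₂∧e₃ + e₋₁∧e₋₂∧e₋₃ + e₀∧(e₁∧e₋₁ + e₂∧e₋₂ + e₃∧e₋₃)`. -/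
noncomputable def omega7 (K : Type) [RCLike K] : ExteriorAlgebra K (Fin 7 → K) :=
  ιMulti K 3 ![e7 K 1, e7 K 2, e7 K 3] + ιMulti K 3 ![e7 K 4, e7 K 5, e7 K 6] +
    ιMulti K 3 ![e7 K 0, e7 K 1, e7 K 4] + ιMulti K 3 ![e7 K 0, e7 K 2, e7 K 5] +
    ιMulti K 3 ![e7 K 0, e7 K 3, e7 K 6]

theorem ι_mul_ιMulti {R M : Type*} [CommRing R] [AddCommGroup M] [Module R M] {n : ℕ}
    (u : M) (w : Fin n → M) : ι R u * ιMulti R n w = ιMulti R (n + 1) (Matrix.vecCons u w) := by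
  simp

section Minor

variable {R I : Type*} [CommRing R]

/-- On `⋀ⁿ`, the coefficient of `e_{σ 0} ∧ ⋯ ∧ e_{σ (n - 1)}`; it vanishes on the other degrees. -/
noncomputable def exteriorMinor {n : ℕ} (σ : Fin n → I) : ExteriorAlgebra R (I → R) →ₗ[R] R :=
  liftAlternating (Pi.single n (Matrix.detRowAlternating.compLinearMap (LinearMap.funLeft R R σ)))

theorem exteriorMinor_ιMulti {n : ℕ} (σ : Fin n → I) (v : Fin n → I → R) :
    exteriorMinor σ (ιMulti R n v) = (Matrix.of fun i j => v i (σ j)).det := by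
  rw [exteriorMinor, liftAlternating_apply_ιMulti, Pi.single_eq_same]
  rfl

variable [DecidableEq I]

theorem exteriorMinor_ι_mul_ιMulti_single_of_succ {n : ℕ} (u : I → R) (w : Fin n → I)
    (σ : Fin (n + 1) → I) (hw : Function.Injective w) (hσ : ∀ k, σ k.succ = w k)
    (h0 : ∀ k, σ 0 ≠ w k) :
    exteriorMinor σ (ι R u * ιMulti R n fun k => Pi.single (w k) 1) = u (σ 0) := by
  have hσ_eq : σ = Matrix.vecCons (σ 0) w := by
    ext k
    cases k using Fin.cases <;> simp [hσ]
  conv_lhs => rw [hσ_eq]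
  rw [ι_mul_ιMulti, exteriorMinor_ιMulti, Matrix.det_succ_column_zero, Fin.sum_univ_succ,
    Finset.sum_eq_zero fun k _ => by simp [Pi.single_apply, h0 k]]
  have hminor : (Matrix.of fun k l => (Pi.single (w k) 1 : I → R) (w l)) = 1 := by
    ext k l
    simp [Pi.single_apply, Matrix.one_apply, hw.eq_iff, eq_comm]
  simp [Matrix.submatrix, hminor]

theorem exteriorMinor_ι_mul_ιMulti_single_eq_zero {n : ℕ} (u : I → R) (w : Fin n → I)
    (σ : Fin (n + 1) → I) (h : ∃ k, ∀ j, σ j ≠ w k) :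
    exteriorMinor σ (ι R u * ιMulti R n fun k => Pi.single (w k) 1) = 0 := by
  obtain ⟨k, hk⟩ := h
  rw [ι_mul_ιMulti, exteriorMinor_ιMulti]
  exact Matrix.det_eq_zero_of_row_eq_zero k.succ fun j => by simp [Pi.single_apply, hk j]

end Minor

def omega7Triple : Fin 5 → Fin 3 → Fin 7 :=
  ![![1, 2, 3], ![4, 5, 6], ![0, 1, 4], ![0, 2, 5], ![0, 3, 6]]

theorem omega7_eq_sum (K : Type) [RCLike K] :
    omega7 K = ∑ t, ιMulti K 3 fun k => Pi.single (omega7Triple t k) 1 := by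
  simp only [omega7, Fin.sum_univ_five]
  congr <;> funext k <;> fin_cases k <;> rfl

def complementTriple (i : Fin 7) : Fin 3 → Fin 7 :=
  if i = 1 ∨ i = 2 ∨ i = 3 then ![4, 5, 6] else ![1, 2, 3]

theorem exteriorMinor_ι_mul_omega7 (K : Type) [RCLike K] (u : Fin 7 → K) (i : Fin 7) :
    exteriorMinor (Matrix.vecCons i (complementTriple i)) (ι K u * omega7 K) = u i := by
  rw [omega7_eq_sum, Finset.mul_sum, map_sum, Fin.sum_univ_five]
  fin_cases i <;>
    simp (disch := decide) only [omega7Triple, complementTriple, Matrix.cons_val_zero,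
      exteriorMinor_ι_mul_ιMulti_single_of_succ, exteriorMinor_ι_mul_ιMulti_single_eq_zero,
      add_zero, zero_add]

theorem eq_zero_of_ι_mul_omega7_eq_zero (K : Type) [RCLike K] (u : Fin 7 → K)
    (h : ι K u * omega7 K = 0) : u = 0 := by
  funext i
  rw [← exteriorMinor_ι_mul_omega7 K u i, h, map_zero, Pi.zero_apply]

theorem omega7_ne_zero (K : Type) [RCLike K] : omega7 K ≠ 0 := fun h =>
  one_ne_zero <|
    congrFun (eq_zero_of_ι_mul_omega7_eq_zero K (Pi.single 0 1) (by rw [h, mul_zero])) 0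

/-- Over `K = ℝ` or `ℂ`, the 3-vector `ω₇` is not decomposable. -/
theorem omega7_not_decomposable (K : Type) [RCLike K] :
    ¬ ∃ v : Fin 3 → (Fin 7 → K), omega7 K = ιMulti K 3 v := by
  rintro ⟨v, hv⟩
  have hv₀ : v 0 = 0 := by
    apply eq_zero_of_ι_mul_omega7_eq_zero
    rw [hv, ιMulti_succ_apply, ← mul_assoc, ι_sq_zero, zero_mul]
  apply omega7_ne_zero K
  rw [hv, ιMulti_succ_apply, hv₀, map_zero, zero_mul]
end

section
/- Let V = K^8 with hyperbolic basis e_1,…,e_4,e_{-1},…,e_{-4} (⟨e_i,e_{-i}⟩ = 1, all other pairings zero). Then the 4-vector ω_8 = 2 e_1∧e_2∧e_3∧e_4 + 2 e_{-1}∧e_{-2}∧e_{-3}∧e_{-4} + Σ_{1≤i<j≤4} e_i∧e_j∧e_{-i}∧e_{-j} is not decomposable, i.e., ω_8 ∉ Ĝr(4,V). -/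
open ExteriorAlgebra

/-- The standard basis of `K^8`, in the ordering `e₁, e₂, e₃, e₄, e₋₁, e₋₂, e₋₃, e₋₄`. -/
noncomputable def e8 (K : Type) [RCLike K] (i : Fin 8) : Fin 8 → K := Pi.single i 1

/-- The 4-form
`ω₈ = 2e₁∧e₂∧e₃∧e₄ + 2e₋₁∧e₋₂∧e₋₃∧e₋₄ + Σ_{1≤i<j≤4} eᵢ∧e_j∧e₋ᵢ∧e₋ⱼ`. -/
noncomputable def omega8 (K : Type) [RCLike K] : ExteriorAlgebra K (Fin 8 → K) :=
  (2 : K) • ιMulti K 4 ![e8 K 0, e8 K 1, e8 K 2, e8 K 3] +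
    (2 : K) • ιMulti K 4 ![e8 K 4, e8 K 5, e8 K 6, e8 K 7] +
    ιMulti K 4 ![e8 K 0, e8 K 1, e8 K 4, e8 K 5] +
    ιMulti K 4 ![e8 K 0, e8 K 2, e8 K 4, e8 K 6] +
    ιMulti K 4 ![e8 K 0, e8 K 3, e8 K 4, e8 K 7] +
    ιMulti K 4 ![e8 K 1, e8 K 2, e8 K 5, e8 K 6] +
    ιMulti K 4 ![e8 K 1, e8 K 3, e8 K 5, e8 K 7] +
    ιMulti K 4 ![e8 K 2, e8 K 3, e8 K 6, e8 K 7]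


/-! A decomposable 4-vector `v₁ ∧ v₂ ∧ v₃ ∧ v₄` squares to zero, since `v₁` occurs twice in its
square. But `ω₈ ∧ ω₈ = 14 e₁ ∧ ⋯ ∧ e₋₄`: only terms with complementary index sets have a nonzero
product, namely `2e₁∧e₂∧e₃∧e₄` with `2e₋₁∧e₋₂∧e₋₃∧e₋₄` in both orders (contributing `2·2·2`), and
`eᵢ∧eⱼ∧e₋ᵢ∧e₋ⱼ` with `e_k∧e_l∧e₋k∧e₋l` for the six ordered splittings `{i,j} ⊔ {k,l}` of
`{1,2,3,4}`, each product being `+e₁ ∧ ⋯ ∧ e₋₄`. As the wedge of a basis is nonzero and `14 ≠ 0`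
in `K`, `ω₈` is not decomposable. -/

namespace ExteriorAlgebra

variable {R M : Type*} [CommRing R] [AddCommGroup M] [Module R M]

theorem ι_mul_ι_mul_swap (x y : M) (z : ExteriorAlgebra R M) :
    ι R x * (ι R y * z) = -(ι R y * (ι R x * z)) := by
  rw [← mul_assoc, ← mul_assoc, ← neg_mul, eq_neg_of_add_eq_zero_left (ι_add_mul_swap x y)]

theorem ι_mul_ι_mul_self (x : M) (z : ExteriorAlgebra R M) : ι R x * (ι R x * z) = 0 := by
  rw [← mul_assoc, ι_sq_zero, zero_mul]

theorem ιMulti_mul_self_eq_zero {n : ℕ} (hn : 0 < n) (v : Fin n → M) :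
    ιMulti R n v * ιMulti R n v = 0 := by
  rw [ιMulti_mul_ιMulti]
  refine (ιMulti R (n + n)).map_eq_zero_of_eq _ (i := Fin.castAdd n ⟨0, hn⟩)
    (j := Fin.natAdd n ⟨0, hn⟩) ?_ ?_
  · rw [Fin.append_left, Fin.append_right]
  · simp [Fin.ext_iff, hn.ne]

theorem ιMulti_basis_ne_zero [Nontrivial R] {n : ℕ} (b : Module.Basis (Fin n) R M) :
    ιMulti R n b ≠ 0 := by
  intro h
  have hdet := exteriorPower.alternatingMapLinearEquiv_apply_ιMulti b.det b
  rw [show exteriorPower.ιMulti R n b = 0 from Subtype.ext h, map_zero,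
    Module.Basis.det_self] at hdet
  exact zero_ne_one hdet

end ExteriorAlgebra

theorem e8_eq_basisFun (K : Type) [RCLike K] : e8 K = ⇑(Pi.basisFun K (Fin 8)) := by
  funext i
  simp [e8]

theorem omega8_mul_self (K : Type) [RCLike K] :
    omega8 K * omega8 K = (14 : K) • ιMulti K 8 (e8 K) := by
  -- the hypothesis `j < i` orients the anticommutation, so that `simp` sorts the factors
  have swap : ∀ i j : Fin 8, j < i → ∀ z : ExteriorAlgebra K (Fin 8 → K),
      ι K (e8 K i) * (ι K (e8 K j) * z) = -(ι K (e8 K j) * (ι K (e8 K i) * z)) :=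
    fun _ _ _ ↦ ι_mul_ι_mul_swap _ _
  have swap_last : ∀ i j : Fin 8, j < i →
      ι K (e8 K i) * ι K (e8 K j) = -(ι K (e8 K j) * ι K (e8 K i)) :=
    fun _ _ _ ↦ eq_neg_of_add_eq_zero_left (ι_add_mul_swap _ _)
  simp only [omega8, ιMulti_apply, List.ofFn_succ, List.ofFn_zero, List.prod_cons, List.prod_nil,
    mul_one, Matrix.cons_val_zero, Matrix.cons_val_succ, Fin.reduceSucc]
  simp only [add_mul, mul_add, smul_mul_assoc, mul_smul_comm, mul_assoc]
  simp only [swap, swap_last, Fin.reduceLT, ι_mul_ι_mul_self, ι_sq_zero, mul_neg, neg_neg,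
    mul_zero, smul_zero, add_zero, zero_add, neg_zero]
  module

/-- Over `K = ℝ` or `ℂ`, the 4-vector `ω₈` is not decomposable. -/
theorem omega8_not_decomposable (K : Type) [RCLike K] :
    ¬ ∃ v : Fin 4 → (Fin 8 → K), omega8 K = ιMulti K 4 v := by
  rintro ⟨v, hv⟩
  have hvol : ιMulti K 8 (e8 K) ≠ 0 := e8_eq_basisFun K ▸ ιMulti_basis_ne_zero _
  apply smul_ne_zero (by norm_num : (14 : K) ≠ 0) hvol
  rw [← omega8_mul_self, hv, ιMulti_mul_self_eq_zero (by norm_num)]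
end
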